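/- Let π, σ be non-disjunctive rules with RE-model sets ℳ = RE(π), 𝒩 = RE(σ), and J an interpretation. Then ℳ and 𝒩 are in conflict on atom p w.r.t. J if and only if for some literal L ∈ {p, ∼p}: H(π) = {L}, H(σ) = {complement of L}, J satisfies both bodies B(π) and B(σ), and neither body contains p or ∼p. -/
import Mathlib


/-- A rule ⟨H,B⟩ over atoms `V`, split into positive/negative head/body atoms. -/
structure Rule (V : Type) where
  Hp : Set V
  Hn : Set V
  Bp : Set V
  Bn : Set V

namespace Rule
variable {V : Type}

/-- `I` satisfies the reduct `π^J`: the reduct is `H⁺ ← B⁺` when `B⁻ ∩ J = ∅` and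
`H⁻ ⊆ J`, and the canonical tautology otherwise. -/
def isRE (π : Rule V) (I J : Set V) : Prop :=
  (π.Bn ∩ J = ∅ ∧ π.Hn ⊆ J) → (π.Bp ⊆ I → (π.Hp ∩ I).Nonempty)

/-- Classical satisfaction `J ⊨ π`. -/
def clSat (π : Rule V) (J : Set V) : Prop :=
  (π.Bp ⊆ J ∧ π.Bn ∩ J = ∅) → ((π.Hp ∩ J).Nonempty ∨ ¬ π.Hn ⊆ J)

/-- `⟨I,J⟩` is an SE-model of `π`. -/
def isSE (π : Rule V) (I J : Set V) : Prop := π.clSat J ∧ π.isRE I J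

/-- The set of RE-models of a rule. -/
def REset (π : Rule V) : Set (Set V × Set V) :=
  {x | x.1 ⊆ x.2 ∧ π.isRE x.1 x.2}

/-- The set of SE-models of a rule. -/
def SEset (π : Rule V) : Set (Set V × Set V) :=
  {x | x.1 ⊆ x.2 ∧ π.isSE x.1 x.2}

end Rule

/-- RE-models of a program (set of rules). -/
def REsetP {V : Type} (P : Set (Rule V)) : Set (Set V × Set V) :=
  {x | x.1 ⊆ x.2 ∧ ∀ π ∈ P, π.isRE x.1 x.2}

/-- SE-models of a program. -/
def SEsetP {V : Type} (P : Set (Rule V)) : Set (Set V × Set V) :=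
  {x | x.1 ⊆ x.2 ∧ ∀ π ∈ P, π.isSE x.1 x.2}

/-- Three truth values. -/
inductive TV : Type | T | U | F
deriving DecidableEq

/-- Truth-value substitution J[v/p] as a three-valued interpretation. -/
def subst {V : Type} (J : Set V) (p : V) : TV → Set V × Set V
  | TV.T => (J ∪ {p}, J ∪ {p})
  | TV.U => (J \ {p}, J ∪ {p})
  | TV.F => (J \ {p}, J \ {p})

/-- ℳ forces p to value v₀ w.r.t. J: J[v/p] ∈ ℳ iff v = v₀. -/
def forces {V : Type} (M : Set (Set V × Set V)) (J : Set V) (p : V) (v0 : TV) : Prop :=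
  ∀ v : TV, subst J p v ∈ M ↔ v = v0

/-- ℳ and 𝒩 are in conflict on p w.r.t. J. -/
def inConflict {V : Type} (M N : Set (Set V × Set V)) (J : Set V) (p : V) : Prop :=
  ∃ v1 v2 : TV, forces M J p v1 ∧ forces N J p v2 ∧ v1 ≠ v2

/-- A rule is non-disjunctive: at most one literal in the head. -/
def nonDisj {V : Type} (π : Rule V) : Prop :=
  (π.Hn = ∅ ∧ π.Hp.Subsingleton) ∨ (π.Hp = ∅ ∧ π.Hn.Subsingleton)

/-- J satisfies the body of π. -/
def bodySat {V : Type} (π : Rule V) (J : Set V) : Prop :=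
  π.Bp ⊆ J ∧ π.Bn ∩ J = ∅

lemma not_isRE_iff {V : Type} (π : Rule V) (I K : Set V) :
    ¬ π.isRE I K ↔ (π.Bn ∩ K = ∅ ∧ π.Hn ⊆ K ∧ π.Bp ⊆ I ∧ π.Hp ∩ I = ∅) := by
  unfold Rule.isRE
  simp only [← Set.not_nonempty_iff_eq_empty]
  tauto

lemma mem_REset_subst {V : Type} (π : Rule V) (J : Set V) (p : V) (v : TV) :
    subst J p v ∈ π.REset ↔ π.isRE (subst J p v).1 (subst J p v).2 := by
  cases v with
  | T => exact ⟨fun h => h.2, fun h => ⟨Set.Subset.rfl, h⟩⟩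
  | U => exact ⟨fun h => h.2, fun h => ⟨(Set.diff_subset).trans Set.subset_union_left, h⟩⟩
  | F => exact ⟨fun h => h.2, fun h => ⟨Set.Subset.rfl, h⟩⟩

lemma forces_iff {V : Type} (π : Rule V) (hπ : nonDisj π) (J : Set V) (p : V) (v0 : TV) :
    forces π.REset J p v0 ↔
      ((v0 = TV.T ∧ π.Hp = {p} ∧ π.Hn = ∅) ∨
       (v0 = TV.F ∧ π.Hp = ∅ ∧ π.Hn = {p})) ∧
      bodySat π J ∧ p ∉ π.Bp ∧ p ∉ π.Bn := by
  have hpa : p ∈ J ∪ {p} := Set.mem_union_right _ rfl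
  have hpb : p ∉ J \ ({p} : Set V) := fun h => h.2 rfl
  have hba : J \ ({p} : Set V) ⊆ J ∪ {p} := (Set.diff_subset).trans Set.subset_union_left
  have hJa : J ⊆ J ∪ {p} := Set.subset_union_left
  have key : ∀ q : V, q ∈ J ∪ {p} → q ∉ J \ ({p} : Set V) → q = p := by
    intro q h1 h2
    rcases h1 with h1 | h1
    · by_contra hq; exact h2 ⟨h1, hq⟩
    · exact h1
  constructor
  · intro h
    have hT := h TV.T
    have hU := h TV.U
    have hF := h TV.F
    rw [mem_REset_subst] at hT hU hF
    simp only [subst] at hT hU hF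
    cases v0 with
    | T =>
      replace hT : π.isRE (J ∪ {p}) (J ∪ {p}) := hT.mpr rfl
      replace hU : ¬ π.isRE (J \ {p}) (J ∪ {p}) := fun hc => TV.noConfusion (hU.mp hc)
      replace hF : ¬ π.isRE (J \ {p}) (J \ {p}) := fun hc => TV.noConfusion (hF.mp hc)
      rw [not_isRE_iff] at hU hF
      obtain ⟨hBn, hHn, hBp, hHp⟩ := hU
      obtain ⟨_, hHn', _, _⟩ := hF
      have hne : (π.Hp ∩ (J ∪ {p})).Nonempty := hT ⟨hBn, hHn⟩ (hBp.trans hba)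
      obtain ⟨q, hq1, hq2⟩ := hne
      have hqp : q = p := key q hq2 (fun hc => Set.eq_empty_iff_forall_notMem.mp hHp q ⟨hq1, hc⟩)
      rw [hqp] at hq1
      rcases hπ with ⟨h1, h2⟩ | ⟨h1, _⟩
      · refine ⟨Or.inl ⟨rfl, ?_, h1⟩, ⟨hBp.trans Set.diff_subset, ?_⟩, fun hc => hpb (hBp hc), ?_⟩
        · exact Set.eq_singleton_iff_unique_mem.mpr ⟨hq1, fun x hx => h2 hx hq1⟩
        · apply Set.eq_empty_iff_forall_notMem.mpr
          intro x hx
          exact Set.eq_empty_iff_forall_notMem.mp hBn x ⟨hx.1, hJa hx.2⟩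
        · exact fun hc => Set.eq_empty_iff_forall_notMem.mp hBn p ⟨hc, hpa⟩
      · exact absurd hq1 (by simp [h1])
    | U =>
      exfalso
      replace hU : π.isRE (J \ {p}) (J ∪ {p}) := hU.mpr rfl
      replace hT : ¬ π.isRE (J ∪ {p}) (J ∪ {p}) := fun hc => TV.noConfusion (hT.mp hc)
      replace hF : ¬ π.isRE (J \ {p}) (J \ {p}) := fun hc => TV.noConfusion (hF.mp hc)
      rw [not_isRE_iff] at hT hF
      obtain ⟨hBn, hHn, hBp, hHp⟩ := hT
      obtain ⟨_, _, hBp', hHp'⟩ := hF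
      have hne : (π.Hp ∩ (J \ {p})).Nonempty := hU ⟨hBn, hHn⟩ hBp'
      rw [hHp'] at hne; exact hne.ne_empty rfl
    | F =>
      replace hF : π.isRE (J \ {p}) (J \ {p}) := hF.mpr rfl
      replace hT : ¬ π.isRE (J ∪ {p}) (J ∪ {p}) := fun hc => TV.noConfusion (hT.mp hc)
      replace hU : ¬ π.isRE (J \ {p}) (J ∪ {p}) := fun hc => TV.noConfusion (hU.mp hc)
      rw [not_isRE_iff] at hT hU
      obtain ⟨hBn, hHn, hBp, hHp⟩ := hT
      obtain ⟨_, _, hBp', _⟩ := hU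
      have hBnb : π.Bn ∩ (J \ {p}) = ∅ := by
        apply Set.eq_empty_iff_forall_notMem.mpr
        intro x hx
        exact Set.eq_empty_iff_forall_notMem.mp hBn x ⟨hx.1, hba hx.2⟩
      have hHnb : ¬ π.Hn ⊆ J \ {p} := by
        intro hc
        have hne : (π.Hp ∩ (J \ {p})).Nonempty := hF ⟨hBnb, hc⟩ hBp'
        obtain ⟨q, hq1, hq2⟩ := hne
        exact Set.eq_empty_iff_forall_notMem.mp hHp q ⟨hq1, hba hq2⟩
      obtain ⟨q, hq1, hq2⟩ := Set.not_subset.mp hHnb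
      have hqp : q = p := key q (hHn hq1) hq2
      rw [hqp] at hq1
      rcases hπ with ⟨h1, _⟩ | ⟨h1, h2⟩
      · exact absurd hq1 (by simp [h1])
      · refine ⟨Or.inr ⟨rfl, h1, ?_⟩, ⟨hBp'.trans Set.diff_subset, ?_⟩,
          fun hc => hpb (hBp' hc), ?_⟩
        · exact Set.eq_singleton_iff_unique_mem.mpr ⟨hq1, fun x hx => h2 hx hq1⟩
        · apply Set.eq_empty_iff_forall_notMem.mpr
          intro x hx
          exact Set.eq_empty_iff_forall_notMem.mp hBn x ⟨hx.1, hJa hx.2⟩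
        · exact fun hc => Set.eq_empty_iff_forall_notMem.mp hBn p ⟨hc, hpa⟩
  · rintro ⟨hcase, ⟨hBpJ, hBnJ⟩, hpBp, hpBn⟩
    have hBpb : π.Bp ⊆ J \ {p} := fun x hx => ⟨hBpJ hx, fun he => hpBp (he ▸ hx)⟩
    have hBna : π.Bn ∩ (J ∪ {p}) = ∅ := by
      apply Set.eq_empty_iff_forall_notMem.mpr
      rintro x ⟨hx1, hx2 | hx2⟩
      · exact Set.eq_empty_iff_forall_notMem.mp hBnJ x ⟨hx1, hx2⟩
      · exact hpBn (hx2 ▸ hx1)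
    have hBnb : π.Bn ∩ (J \ {p}) = ∅ := by
      apply Set.eq_empty_iff_forall_notMem.mpr
      rintro x ⟨hx1, hx2⟩
      exact Set.eq_empty_iff_forall_notMem.mp hBna x ⟨hx1, hba hx2⟩
    rcases hcase with ⟨hv, hHp, hHn⟩ | ⟨hv, hHp, hHn⟩ <;> subst hv <;> intro v <;>
      rw [mem_REset_subst] <;> cases v <;> simp only [subst] <;>
      constructor <;> intro hh
    · trivial
    · intro _ _; exact ⟨p, by simp [hHp], hpa⟩
    · exfalso
      have := hh ⟨hBna, by simp [hHn]⟩ hBpb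
      obtain ⟨q, hq1, hq2⟩ := this
      rw [hHp] at hq1; simp at hq1; subst hq1; exact hpb hq2
    · exact absurd hh (by simp)
    · exfalso
      have := hh ⟨hBnb, by simp [hHn]⟩ hBpb
      obtain ⟨q, hq1, hq2⟩ := this
      rw [hHp] at hq1; simp at hq1; subst hq1; exact hpb hq2
    · exact absurd hh (by simp)
    · exfalso
      have := hh ⟨hBna, by simp [hHn, hpa]⟩ (hBpb.trans hba)
      obtain ⟨q, hq1, _⟩ := this
      rw [hHp] at hq1; exact hq1
    · exact absurd hh (by simp)
    · exfalso
      have := hh ⟨hBna, by simp [hHn, hpa]⟩ hBpb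
      obtain ⟨q, hq1, _⟩ := this
      rw [hHp] at hq1; exact hq1
    · exact absurd hh (by simp)
    · trivial
    · intro ⟨_, hc⟩
      exfalso
      rw [hHn] at hc
      exact hpb (hc rfl)

/-- Semantic conflict of the RE-model sets of two non-disjunctive rules corresponds
exactly to a syntactic conflict: complementary singleton heads on p, both bodies
satisfied by J, and neither body mentioning p. -/
theorem stmt17 {V : Type} [Fintype V] (π σ : Rule V)
    (hπ : nonDisj π) (hσ : nonDisj σ) (J : Set V) (p : V) :
    inConflict π.REset σ.REset J p ↔
      (((π.Hp = {p} ∧ π.Hn = ∅ ∧ σ.Hp = ∅ ∧ σ.Hn = {p}) ∨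
        (π.Hp = ∅ ∧ π.Hn = {p} ∧ σ.Hp = {p} ∧ σ.Hn = ∅)) ∧
       bodySat π J ∧ bodySat σ J ∧
       p ∉ π.Bp ∧ p ∉ π.Bn ∧ p ∉ σ.Bp ∧ p ∉ σ.Bn) := by
  constructor
  · rintro ⟨v1, v2, h1, h2, hne⟩
    rw [forces_iff π hπ] at h1
    rw [forces_iff σ hσ] at h2
    obtain ⟨hc1, hb1, hp1, hn1⟩ := h1
    obtain ⟨hc2, hb2, hp2, hn2⟩ := h2
    rcases hc1 with ⟨hv1, a1, a2⟩ | ⟨hv1, a1, a2⟩ <;>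
      rcases hc2 with ⟨hv2, b1, b2⟩ | ⟨hv2, b1, b2⟩
    · exact absurd (hv1.trans hv2.symm) hne
    · exact ⟨Or.inl ⟨a1, a2, b1, b2⟩, hb1, hb2, hp1, hn1, hp2, hn2⟩
    · exact ⟨Or.inr ⟨a1, a2, b1, b2⟩, hb1, hb2, hp1, hn1, hp2, hn2⟩
    · exact absurd (hv1.trans hv2.symm) hne
  · rintro ⟨hc, hb1, hb2, hp1, hn1, hp2, hn2⟩
    rcases hc with ⟨a1, a2, b1, b2⟩ | ⟨a1, a2, b1, b2⟩
    · exact ⟨TV.T, TV.F,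
        (forces_iff π hπ J p _).mpr ⟨Or.inl ⟨rfl, a1, a2⟩, hb1, hp1, hn1⟩,
        (forces_iff σ hσ J p _).mpr ⟨Or.inr ⟨rfl, b1, b2⟩, hb2, hp2, hn2⟩, by decide⟩
    · exact ⟨TV.F, TV.T,
        (forces_iff π hπ J p _).mpr ⟨Or.inr ⟨rfl, a1, a2⟩, hb1, hp1, hn1⟩,
        (forces_iff σ hσ J p _).mpr ⟨Or.inl ⟨rfl, b1, b2⟩, hb2, hp2, hn2⟩, by decide⟩
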